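/- Under the setting of the previous statement (g convex differentiable, l-Lipschitz gradient, bounded below by C₂, L > l, projected gradient iterates θ_m on Θ), there exists c ∈ ℝ such that g(θ_m) decreases monotonically to c, and for every positive integer M, min_{1 ≤ m ≤ M} ‖θ_{m+1} - θ_m‖₂² ≤ 2(g(θ₁) - c) / (M(L - l)). -/

import Mathlib

/-!
Testing the projection property of `θ (m + 1)` against the feasible point `θ m` gives
`⟪∇g(θ m), θ (m + 1) - θ m⟫ ≤ -(L/2) ‖θ (m + 1) - θ m‖²`; combined with the quadratic upper
bound that an `l`-Lipschitz gradient provides, this is the sufficient decrease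
`g (θ (m + 1)) ≤ g (θ m) - (L - l)/2 ‖θ (m + 1) - θ m‖²`. Hence the values decrease to their
infimum `c`, and telescoping the decrease over `m = 1, …, M` bounds the smallest step.
-/

open scoped RealInnerProductSpace

section GradientStep

variable {E : Type*} [NormedAddCommGroup E] [InnerProductSpace ℝ E]

lemma inner_le_neg_mul_norm_sq_of_norm_sub_step_le {L : ℝ} (hL : 0 < L) {x y G : E}
    (hstep : ‖y - (x - (1 / L) • G)‖ ^ 2 ≤ ‖x - (x - (1 / L) • G)‖ ^ 2) :
    ⟪G, y - x⟫ ≤ -(L / 2) * ‖y - x‖ ^ 2 := by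
  have hexpand : ‖y - (x - (1 / L) • G)‖ ^ 2
      = ‖y - x‖ ^ 2 + 2 / L * ⟪G, y - x⟫ + ‖(1 / L) • G‖ ^ 2 := by
    rw [show y - (x - (1 / L) • G) = (y - x) + (1 / L) • G by abel, norm_add_sq_real,
      real_inner_smul_right, real_inner_comm]
    ring
  rw [hexpand, sub_sub_cancel] at hstep
  have hscaled : 2 / L * ⟪G, y - x⟫ ≤ -‖y - x‖ ^ 2 := by linarith
  calc ⟪G, y - x⟫ = L / 2 * (2 / L * ⟪G, y - x⟫) := by field_simp
    _ ≤ L / 2 * -‖y - x‖ ^ 2 := by gcongr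
    _ = -(L / 2) * ‖y - x‖ ^ 2 := by ring

variable [CompleteSpace E] {f : E → ℝ} {l : ℝ}

lemma le_add_inner_gradient_add_sq_of_lipschitz_gradient (hf : Differentiable ℝ f)
    (hlip : ∀ x y, ‖gradient f x - gradient f y‖ ≤ l * ‖x - y‖) (x y : E) :
    f y ≤ f x + ⟪gradient f x, y - x⟫ + l / 2 * ‖y - x‖ ^ 2 := by
  set Δ := y - x
  -- `φ` is antitone on `[0, ∞)`, and `φ 1 ≤ φ 0` is the claim.
  let φ : ℝ → ℝ := fun t => f (x + t • Δ) - t * ⟪gradient f x, Δ⟫ - l / 2 * t ^ 2 * ‖Δ‖ ^ 2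
  have hφ : ∀ t, HasDerivAt φ
      (⟪gradient f (x + t • Δ), Δ⟫ - ⟪gradient f x, Δ⟫ - l * t * ‖Δ‖ ^ 2) t := by
    intro t
    have hline : HasDerivAt (fun t : ℝ => x + t • Δ) Δ t := by
      simpa using ((hasDerivAt_id t).smul_const Δ).const_add x
    have hcomp : HasDerivAt (fun t : ℝ => f (x + t • Δ)) ⟪gradient f (x + t • Δ), Δ⟫ t := by
      simpa [Function.comp_def] using
        (hf (x + t • Δ)).hasGradientAt.hasFDerivAt.comp_hasDerivAt t hline
    refine ((hcomp.sub ((hasDerivAt_id t).mul_const ⟪gradient f x, Δ⟫)).sub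
      (((hasDerivAt_pow 2 t).const_mul (l / 2)).mul_const (‖Δ‖ ^ 2))).congr_deriv ?_
    simp only [Nat.cast_ofNat]
    ring
  have hφ' : ∀ t ∈ interior (Set.Ici (0 : ℝ)),
      ⟪gradient f (x + t • Δ), Δ⟫ - ⟪gradient f x, Δ⟫ - l * t * ‖Δ‖ ^ 2 ≤ 0 := by
    intro t ht
    rw [interior_Ici, Set.mem_Ioi] at ht
    rw [sub_nonpos]
    have hgrad : ‖gradient f (x + t • Δ) - gradient f x‖ ≤ l * (t * ‖Δ‖) := by
      simpa [norm_smul, abs_of_pos ht] using hlip (x + t • Δ) x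
    calc ⟪gradient f (x + t • Δ), Δ⟫ - ⟪gradient f x, Δ⟫
        = ⟪gradient f (x + t • Δ) - gradient f x, Δ⟫ := (inner_sub_left _ _ _).symm
      _ ≤ ‖gradient f (x + t • Δ) - gradient f x‖ * ‖Δ‖ := real_inner_le_norm _ _
      _ ≤ l * (t * ‖Δ‖) * ‖Δ‖ := by gcongr
      _ = l * t * ‖Δ‖ ^ 2 := by ring
  have hanti : AntitoneOn φ (Set.Ici 0) :=
    antitoneOn_of_hasDerivWithinAt_nonpos (convex_Ici 0)
      (fun t _ => (hφ t).continuousAt.continuousWithinAt)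
      (fun t _ => (hφ t).hasDerivWithinAt) hφ'
  have h10 : φ 1 ≤ φ 0 := hanti Set.self_mem_Ici (by norm_num) zero_le_one
  simp only [φ, one_smul, zero_smul, add_zero, Δ, add_sub_cancel] at h10
  linarith

lemma le_sub_mul_norm_sq_of_projected_gradient_step (hf : Differentiable ℝ f)
    (hlip : ∀ x y, ‖gradient f x - gradient f y‖ ≤ l * ‖x - y‖) {L : ℝ} (hL : l < L) {x y : E}
    (hstep : ‖y - (x - (1 / L) • gradient f x)‖ ^ 2 ≤ ‖x - (x - (1 / L) • gradient f x)‖ ^ 2) :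
    f y ≤ f x - (L - l) / 2 * ‖y - x‖ ^ 2 := by
  rcases eq_or_ne y x with rfl | hyx
  · simp
  have hl : 0 ≤ l := nonneg_of_mul_nonneg_left ((norm_nonneg _).trans (hlip y x))
    (norm_pos_iff.mpr (sub_ne_zero.mpr hyx))
  have hLpos : 0 < L := hl.trans_lt hL
  have hinner := inner_le_neg_mul_norm_sq_of_norm_sub_step_le hLpos hstep
  have hupper := le_add_inner_gradient_add_sq_of_lipschitz_gradient hf hlip x y
  linarith

end GradientStep

lemma exists_le_div_of_le_sub_succ {u a : ℕ → ℝ} {c : ℝ} (ha : ∀ m, a m ≤ u m - u (m + 1))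
    (hc : ∀ m, c ≤ u m) {M : ℕ} (hM : 1 ≤ M) :
    ∃ m, 1 ≤ m ∧ m ≤ M ∧ a m ≤ (u 1 - c) / M := by
  have hMpos : (0 : ℝ) < M := by exact_mod_cast hM
  have hsum : ∑ i ∈ Finset.range M, a (i + 1) ≤ ∑ _i ∈ Finset.range M, (u 1 - c) / M := by
    calc ∑ i ∈ Finset.range M, a (i + 1)
        ≤ ∑ i ∈ Finset.range M, (u (i + 1) - u (i + 1 + 1)) :=
          Finset.sum_le_sum fun i _ => ha (i + 1)
      _ = u 1 - u (M + 1) := Finset.sum_range_sub' (fun i => u (i + 1)) M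
      _ ≤ u 1 - c := by linarith [hc (M + 1)]
      _ = ∑ _i ∈ Finset.range M, (u 1 - c) / M := by
          rw [Finset.sum_const, Finset.card_range, nsmul_eq_mul, mul_div_cancel₀ _ hMpos.ne']
  obtain ⟨i, hi, hai⟩ := Finset.exists_le_of_sum_le ⟨0, Finset.mem_range.mpr hM⟩ hsum
  exact ⟨i + 1, by omega, Finset.mem_range.mp hi, hai⟩

theorem projected_gradient_convergence_rate_general {d : ℕ}
    (g : EuclideanSpace ℝ (Fin d) → ℝ) (l L C₂ : ℝ)
    (hdiff : Differentiable ℝ g)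
    (hlip : ∀ θ θ' : EuclideanSpace ℝ (Fin d),
      ‖gradient g θ - gradient g θ'‖ ≤ l * ‖θ - θ'‖)
    (hbdd : ∀ θ, C₂ ≤ g θ)
    (hL : l < L)
    (Θ : Set (EuclideanSpace ℝ (Fin d)))
    (θ : ℕ → EuclideanSpace ℝ (Fin d))
    (hmem : ∀ m, θ m ∈ Θ)
    (hmin : ∀ m, ∀ θ' ∈ Θ, ‖θ (m + 1) - (θ m - (1 / L) • gradient g (θ m))‖ ^ 2 ≤
      ‖θ' - (θ m - (1 / L) • gradient g (θ m))‖ ^ 2) :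
    ∃ c : ℝ, Antitone (fun m => g (θ m)) ∧ (∀ m, c ≤ g (θ m)) ∧
      Filter.Tendsto (fun m => g (θ m)) Filter.atTop (nhds c) ∧
      ∀ M : ℕ, 1 ≤ M → ∃ m, 1 ≤ m ∧ m ≤ M ∧
        ‖θ (m + 1) - θ m‖ ^ 2 ≤ 2 * (g (θ 1) - c) / (M * (L - l)) := by
  have hLl : 0 < L - l := sub_pos.mpr hL
  have hdecrease m : g (θ (m + 1)) ≤ g (θ m) - (L - l) / 2 * ‖θ (m + 1) - θ m‖ ^ 2 :=
    le_sub_mul_norm_sq_of_projected_gradient_step hdiff hlip hL (hmin m (θ m) (hmem m))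
  have hanti : Antitone fun m => g (θ m) :=
    antitone_nat_of_succ_le fun m => (hdecrease m).trans (sub_le_self _ (by positivity))
  have hbddBelow : BddBelow (Set.range fun m => g (θ m)) :=
    ⟨C₂, by rintro _ ⟨m, rfl⟩; exact hbdd _⟩
  have hinf_le m : ⨅ n, g (θ n) ≤ g (θ m) := ciInf_le hbddBelow m
  refine ⟨⨅ m, g (θ m), hanti, hinf_le, tendsto_atTop_ciInf hanti hbddBelow, fun M hM => ?_⟩
  obtain ⟨m, hm1, hmM, hstep⟩ := exists_le_div_of_le_sub_succ
    (a := fun m => (L - l) / 2 * ‖θ (m + 1) - θ m‖ ^ 2) (by intro m; linarith [hdecrease m])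
    hinf_le hM
  refine ⟨m, hm1, hmM, ?_⟩
  have hMpos : (0 : ℝ) < M := by exact_mod_cast hM
  rw [le_div_iff₀ hMpos] at hstep
  rw [le_div_iff₀ (by positivity)]
  linarith

/-- Convergence rate of the warm-start projected gradient algorithm: the objective values
decrease monotonically to some `c`, and the smallest squared step over the first `M`
iterations is at most `2(g(θ₁) - c)/(M(L - l))`. -/
theorem projected_gradient_convergence_rate {d : ℕ}
    (g : EuclideanSpace ℝ (Fin d) → ℝ) (l L C₂ : ℝ)
    (hconv : ConvexOn ℝ Set.univ g)
    (hdiff : Differentiable ℝ g)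
    (hlip : ∀ θ θ' : EuclideanSpace ℝ (Fin d),
      ‖gradient g θ - gradient g θ'‖ ≤ l * ‖θ - θ'‖)
    (hbdd : ∀ θ, C₂ ≤ g θ)
    (hL : l < L)
    (Θ : Set (EuclideanSpace ℝ (Fin d))) (hΘ : Θ.Nonempty)
    (θ : ℕ → EuclideanSpace ℝ (Fin d))
    (hmem : ∀ m, θ m ∈ Θ)
    (hmin : ∀ m, ∀ θ' ∈ Θ, ‖θ (m + 1) - (θ m - (1 / L) • gradient g (θ m))‖ ^ 2 ≤
      ‖θ' - (θ m - (1 / L) • gradient g (θ m))‖ ^ 2) :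
    ∃ c : ℝ, Antitone (fun m => g (θ m)) ∧ (∀ m, c ≤ g (θ m)) ∧
      Filter.Tendsto (fun m => g (θ m)) Filter.atTop (nhds c) ∧
      ∀ M : ℕ, 1 ≤ M → ∃ m, 1 ≤ m ∧ m ≤ M ∧
        ‖θ (m + 1) - θ m‖ ^ 2 ≤ 2 * (g (θ 1) - c) / (M * (L - l)) :=
  projected_gradient_convergence_rate_general g l L C₂ hdiff hlip hbdd hL Θ θ hmem hmin
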